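/- arXiv:2109.11711 — 2 statements merged into one kernel-verified Lean document; each statement's English description precedes it below -/
import Mathlib

section
/- Theorem (stable volumes are the noise-robust part of optimal volumes, graph-theoretic form of the paper's Theorem 3.2). Let r = (r̂, ≼_r) be an order with levels on X, let (τ₀, ω₀) be a persistence pair of r, and let ε > 0. Then SV_ε(r, τ₀, ω₀) = ⋂_{q ∈ R_ε} OV(q, ω₀). -/
/-!
`⊆`: for `q ∈ R_ε` with death simplex `τ` of `ω₀`, every edge of `G(r̂ ≥ r̂(τ₀) + ε)` has
`q̂ ≥ r̂(τ₀) + ε/2`. If `q̂(τ)` were at least that much, then `G(⪰_q τ)` would be a subgraph of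
`G(≻_r τ₀)`; but the component of `ω₀` in `G(⪰_q τ)` contains a cell `≻_q ω₀`, while every cell
of `OV(r, ω₀)` is `≺_r ω₀`, hence `≺_q ω₀` by the order condition. So `q̂(τ)` is smaller, and
`SV_ε ⊆ OV(q, ω₀)`.

`⊇`: let `c ∉ SV_ε` and `E = G(r̂ ≥ r̂(τ₀) + ε)`. A walk in `G(⪰_r τ₀)` leads from `ω₀` to a
cell `m ≻_r ω₀`. Of the `E`-components of `ω₀` and `c`, adding to `E` the edges of `G(⪰_r τ₀)`
that avoid the one the walk does not visit last gives an edge set `A` whose component of `ω₀`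
misses `c`, while `m` lies in the `A`-component of `ω₀` or of `c`. Raise `A` and the
`n`-simplices by `η` and lower all other simplices by `η`, where `η < ε/2` is so close to `ε/2`
that no level of `r` lies in `[r̂(τ₀) + 2η, r̂(τ₀) + ε)`: this gives `q ∈ R_ε` with
`A = G(q̂ ≥ r̂(τ₀) + η)`. If the death simplex `τ` of `ω₀` in `q` is below this threshold, then
`A ⊆ G(≻_q τ)` and `c ∈ OV(q, ω₀)` would put `m` there too, above its maximum `ω₀`; otherwise
`OV(q, ω₀)` lies in the `A`-component of `ω₀`, which misses `c`.
-/

open scoped Classical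

namespace StableVol

/-- A finite abstract simplicial complex of dimension `n`: a finite family of nonempty
finite subsets of the vertex set, closed under nonempty subsets, in which every element
is contained in an element of cardinality `n+1`. -/
structure NComplex (V : Type*) [DecidableEq V] (n : ℕ) where
  X : Finset (Finset V)
  nonempty_mem : ∀ σ ∈ X, σ.Nonempty
  down_closed : ∀ σ ∈ X, ∀ σ' : Finset V, σ' ⊆ σ → σ'.Nonempty → σ' ∈ X
  contained_top : ∀ σ ∈ X, ∃ ω ∈ X, σ ⊆ ω ∧ ω.card = n + 1

variable {V : Type*} [DecidableEq V] {n : ℕ}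

/-- An `n`-cell is either an `n`-simplex (`some ω`) or the formal cell `ω∞` (`none`). -/
abbrev Cell (V : Type*) := Option (Finset V)

/-- `τ` is a face of the cell `c`.  For `c = some ω` this means that `ω` is an
`n`-simplex of `X` containing `τ`; the faces of `ω∞ = none` are the `(n-1)`-simplices
having exactly one `n`-simplex coface. -/
def faceCell (C : NComplex V n) (τ : Finset V) : Cell V → Prop
  | some ω => ω ∈ C.X ∧ ω.card = n + 1 ∧ τ ⊆ ω
  | none => {ω | ω ∈ C.X ∧ ω.card = n + 1 ∧ τ ⊆ ω}.ncard = 1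

def IsCell (C : NComplex V n) : Cell V → Prop
  | some ω => ω ∈ C.X ∧ ω.card = n + 1
  | none => True

/-- Adjacency in the dual graph, restricted to the edge set `E ⊆ X^(n-1)`. -/
def adj (C : NComplex V n) (E : Set (Finset V)) (c c' : Cell V) : Prop :=
  ∃ τ ∈ E, faceCell C τ c ∧ faceCell C τ c' ∧ c ≠ c'

/-- `KV C E c₀`: the set of `n`-cells in the connected component of `c₀` in the
subgraph of the dual graph with edge set `E`. -/
def KV (C : NComplex V n) (E : Set (Finset V)) (c₀ : Cell V) : Set (Cell V) :=
  {c | Relation.ReflTransGen (adj C E) c₀ c}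

/-- Every `(n-1)`-simplex of `X` is a face of exactly two `n`-cells. -/
def TwoCofaces (C : NComplex V n) : Prop :=
  ∀ τ ∈ C.X, τ.card = n →
    ∃ c₁ c₂ : Cell V, c₁ ≠ c₂ ∧ ∀ c : Cell V, faceCell C τ c ↔ (c = c₁ ∨ c = c₂)

/-- The dual graph (with full edge set `X^(n-1)`) is connected. -/
def DualConn (C : NComplex V n) : Prop :=
  ∀ c c' : Cell V, IsCell C c → IsCell C c' →
    c' ∈ KV C {τ | τ ∈ C.X ∧ τ.card = n} c

/-- A level function: monotone with respect to strict inclusion of simplices. -/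
def IsLevelFun (C : NComplex V n) (lev : Finset V → ℝ) : Prop :=
  ∀ σ ∈ C.X, ∀ σ' ∈ C.X, σ ⊂ σ' → lev σ ≤ lev σ'

/-- `(lev, slt)` is an order with levels on `X`: `lev` is a level function and `slt`
is (the strict form of) a linear order on `X` refining both `lev` and strict
inclusion. -/
def IsOWL (C : NComplex V n) (lev : Finset V → ℝ)
    (slt : Finset V → Finset V → Prop) : Prop :=
  IsLevelFun C lev ∧
  (∀ σ ∈ C.X, ¬ slt σ σ) ∧
  (∀ σ ∈ C.X, ∀ σ' ∈ C.X, ∀ σ'' ∈ C.X, slt σ σ' → slt σ' σ'' → slt σ σ'') ∧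
  (∀ σ ∈ C.X, ∀ σ' ∈ C.X, σ ≠ σ' → slt σ σ' ∨ slt σ' σ) ∧
  (∀ σ ∈ C.X, ∀ σ' ∈ C.X, slt σ σ' → lev σ ≤ lev σ') ∧
  (∀ σ ∈ C.X, ∀ σ' ∈ C.X, σ ⊂ σ' → slt σ σ')

/-- Extension of a strict order on simplices to `n`-cells, `ω∞ = none` being the
unique maximum. -/
def cslt (slt : Finset V → Finset V → Prop) : Cell V → Cell V → Prop
  | some σ, some σ' => slt σ σ'
  | some _, none => True
  | none, _ => False

/-- `m` is the maximum cell of the set `S` with respect to the order `slt`. -/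
def IsMaxCell (slt : Finset V → Finset V → Prop) (S : Set (Cell V)) (m : Cell V) :
    Prop :=
  m ∈ S ∧ ∀ c ∈ S, c ≠ m → cslt slt c m

/-- Edge set of `G(≻ σ₀)`: the `(n-1)`-simplices strictly above `σ₀`. -/
def Egt (C : NComplex V n) (slt : Finset V → Finset V → Prop) (σ₀ : Finset V) :
    Set (Finset V) :=
  {τ | τ ∈ C.X ∧ τ.card = n ∧ slt σ₀ τ}

/-- Edge set of `G(⪰ σ₀)`. -/
def Ege (C : NComplex V n) (slt : Finset V → Finset V → Prop) (σ₀ : Finset V) :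
    Set (Finset V) :=
  {τ | τ ∈ C.X ∧ τ.card = n ∧ (τ = σ₀ ∨ slt σ₀ τ)}

/-- Edge set of `G(lev ≥ s)`. -/
def Elev (C : NComplex V n) (lev : Finset V → ℝ) (s : ℝ) : Set (Finset V) :=
  {τ | τ ∈ C.X ∧ τ.card = n ∧ s ≤ lev τ}

/-- `(τ₀, ω₀)` is a persistence pair of the order `slt`: the two `n`-cells having
`τ₀` as a face lie in distinct connected components of `G(≻ τ₀)`, and `ω₀` is the
smaller of the two maximum cells of these two components. -/
def IsPersPair (C : NComplex V n) (slt : Finset V → Finset V → Prop)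
    (τ₀ ω₀ : Finset V) : Prop :=
  τ₀ ∈ C.X ∧ τ₀.card = n ∧ ω₀ ∈ C.X ∧ ω₀.card = n + 1 ∧
  ∃ c₁ c₂ : Cell V, c₁ ≠ c₂ ∧ faceCell C τ₀ c₁ ∧ faceCell C τ₀ c₂ ∧
    c₂ ∉ KV C (Egt C slt τ₀) c₁ ∧
    ∃ m₂ : Cell V,
      IsMaxCell slt (KV C (Egt C slt τ₀) c₁) (some ω₀) ∧
      IsMaxCell slt (KV C (Egt C slt τ₀) c₂) m₂ ∧
      cslt slt (some ω₀) m₂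

/-- The optimal volume `OV(q, ω₀) = K_V(G(≻_q τ_{q,ω₀}), ω₀)`. -/
def OV (C : NComplex V n) (slt : Finset V → Finset V → Prop) (ω₀ : Finset V) :
    Set (Cell V) :=
  {c | ∃ τ, IsPersPair C slt τ ω₀ ∧ c ∈ KV C (Egt C slt τ) (some ω₀)}

/-- The stable volume `SV_ε(r, τ₀, ω₀) = K_V(G(r̂ ≥ r̂(τ₀) + ε), ω₀)`. -/
def SV (C : NComplex V n) (lev : Finset V → ℝ) (τ₀ ω₀ : Finset V) (ε : ℝ) :
    Set (Cell V) :=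
  KV C (Elev C lev (lev τ₀ + ε)) (some ω₀)

/-- `(qlev, qslt) ∈ R_ε`: an order with levels uniformly `ε/2`-close to `rlev`
satisfying the `(r, ω₀)`-order condition. -/
def InR (C : NComplex V n) (rlev : Finset V → ℝ)
    (rslt : Finset V → Finset V → Prop) (ω₀ : Finset V) (ε : ℝ)
    (qlev : Finset V → ℝ) (qslt : Finset V → Finset V → Prop) : Prop :=
  IsOWL C qlev qslt ∧ (∀ σ ∈ C.X, |qlev σ - rlev σ| < ε / 2) ∧
  (∀ σ ∈ C.X, rslt σ ω₀ → qslt σ ω₀)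

/-- `F_{ε,n}`: the `n`-simplices with level at least `lev τ₀ + ε` that precede `ω₀`. -/
def Fcells (C : NComplex V n) (lev : Finset V → ℝ)
    (slt : Finset V → Finset V → Prop) (τ₀ ω₀ : Finset V) (ε : ℝ) :
    Set (Finset V) :=
  {σ | σ ∈ C.X ∧ σ.card = n + 1 ∧ lev τ₀ + ε ≤ lev σ ∧ slt σ ω₀}

/-- `F_{ε,n-1}`: the `(n-1)`-simplices with level at least `lev τ₀ + ε` that
precede `ω₀`. -/
def Fedges (C : NComplex V n) (lev : Finset V → ℝ)
    (slt : Finset V → Finset V → Prop) (τ₀ ω₀ : Finset V) (ε : ℝ) :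
    Set (Finset V) :=
  {σ | σ ∈ C.X ∧ σ.card = n ∧ lev τ₀ + ε ≤ lev σ ∧ slt σ ω₀}

/-- `τ*(∂z)`: the `ℤ/2ℤ`-sum of the coefficients of `z` over the `n`-simplex
cofaces of `τ`. -/
def bsum (C : NComplex V n) (τ : Finset V) (z : Finset V → ZMod 2) : ZMod 2 :=
  ∑ ω ∈ C.X.filter (fun ω => ω.card = n + 1 ∧ τ ⊆ ω), z ω

/-- A feasible chain `z = ω₀ + Σ_{ω ∈ F_{ε,n}} α_ω ω` with `τ*(∂z) = 0` for all
`τ ∈ F_{ε,n-1}`. -/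
def IsFeasible (C : NComplex V n) (lev : Finset V → ℝ)
    (slt : Finset V → Finset V → Prop) (τ₀ ω₀ : Finset V) (ε : ℝ)
    (z : Finset V → ZMod 2) : Prop :=
  z ω₀ = 1 ∧
  (∀ ω : Finset V, ω ≠ ω₀ → ω ∉ Fcells C lev slt τ₀ ω₀ ε → z ω = 0) ∧
  (∀ τ ∈ Fedges C lev slt τ₀ ω₀ ε, bsum C τ z = 0)

/-- `‖z‖₀`: the number of simplices of `X` with nonzero coefficient in `z`. -/
def norm0 (C : NComplex V n) (z : Finset V → ZMod 2) : ℕ :=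
  (C.X.filter fun ω => z ω ≠ 0).card

/-- The level function of the perturbed order `q(r, η, A)`. -/
noncomputable def pertLev (C : NComplex V n) (rlev : Finset V → ℝ) (η : ℝ)
    (A : Set (Finset V)) : Finset V → ℝ :=
  fun σ => if (σ ∈ C.X ∧ σ.card = n + 1) ∨ σ ∈ A then rlev σ + η else rlev σ - η

/-- The strict order of the perturbed order `q(r, η, A)`. -/
def pertSlt (C : NComplex V n) (rlev : Finset V → ℝ)
    (rslt : Finset V → Finset V → Prop) (η : ℝ) (A : Set (Finset V)) :
    Finset V → Finset V → Prop :=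
  fun σ σ' => pertLev C rlev η A σ < pertLev C rlev η A σ' ∨
    (pertLev C rlev η A σ = pertLev C rlev η A σ' ∧ rslt σ σ')

/-- The `(n-1)`-simplices that are edges of the connected component of `c₀` in the
subgraph with edge set `E`. -/
def compEdges (C : NComplex V n) (E : Set (Finset V)) (c₀ : Cell V) :
    Set (Finset V) :=
  {τ | τ ∈ E ∧ ∃ c, faceCell C τ c ∧ c ∈ KV C E c₀}

/-- `IsPath C E c c' vs es`: `vs` is the vertex list and `es` the edge list of a walk
from `c` to `c'` in the subgraph of the dual graph with edge set `E`. -/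
inductive IsPath (C : NComplex V n) (E : Set (Finset V)) :
    Cell V → Cell V → List (Cell V) → List (Finset V) → Prop
  | nil (c : Cell V) : IsPath C E c c [c] []
  | cons {c c' c'' : Cell V} {vs : List (Cell V)} {es : List (Finset V)}
      {τ : Finset V} : τ ∈ E → faceCell C τ c → faceCell C τ c' → c ≠ c' →
      IsPath C E c' c'' vs es → IsPath C E c c'' (c :: vs) (τ :: es)

lemma exists_forall_rel_of_strictTotal {α : Type*} {lt : α → α → Prop} (T : Finset α)
    (hT : T.Nonempty) (hirr : ∀ a ∈ T, ¬ lt a a)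
    (htrans : ∀ a ∈ T, ∀ b ∈ T, ∀ c ∈ T, lt a b → lt b c → lt a c)
    (htot : ∀ a ∈ T, ∀ b ∈ T, a ≠ b → lt a b ∨ lt b a) :
    ∃ m ∈ T, ∀ x ∈ T, x ≠ m → lt x m := by
  let gt : T → T → Prop := fun a b => lt b a
  have : IsTrans T gt := ⟨fun a b c hab hbc => htrans _ c.2 _ b.2 _ a.2 hbc hab⟩
  have : Std.Irrefl gt := ⟨fun a => hirr _ a.2⟩
  obtain ⟨m, -, hm⟩ := (Finite.wellFounded_of_trans_of_irrefl gt).has_min Set.univ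
    ⟨⟨_, hT.choose_spec⟩, trivial⟩
  exact ⟨m, m.2, fun x hx hxm =>
    (htot x hx m m.2 hxm).resolve_right fun h => hm ⟨x, hx⟩ trivial h⟩

section DualGraph

variable {C : NComplex V n} {E F : Set (Finset V)} {τ : Finset V} {a b c : Cell V}

lemma card_le_of_mem {σ : Finset V} (h : σ ∈ C.X) : σ.card ≤ n + 1 := by
  obtain ⟨ω, -, hσω, hω⟩ := C.contained_top σ h
  exact hω ▸ Finset.card_le_card hσω

lemma isCell_of_faceCell (h : faceCell C τ c) : IsCell C c := by
  cases c with
  | none => trivial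
  | some ω => exact ⟨h.1, h.2.1⟩

lemma TwoCofaces.eq_or_eq (htwo : TwoCofaces C) (hτ : τ ∈ C.X) (hτn : τ.card = n)
    (ha : faceCell C τ a) (hb : faceCell C τ b) (hab : a ≠ b) (hc : faceCell C τ c) :
    c = a ∨ c = b := by
  obtain ⟨c₁, c₂, -, h⟩ := htwo τ hτ hτn
  rcases (h a).1 ha with rfl | rfl <;> rcases (h b).1 hb with rfl | rfl <;>
    rcases (h c).1 hc with rfl | rfl <;> simp_all

lemma adj_symm (h : adj C E a b) : adj C E b a :=
  let ⟨τ, hτ, ha, hb, hab⟩ := h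
  ⟨τ, hτ, hb, ha, hab.symm⟩

lemma mem_KV_self : a ∈ KV C E a := Relation.ReflTransGen.refl

lemma mem_KV_of_adj (h : adj C E a b) : b ∈ KV C E a := Relation.ReflTransGen.single h

lemma mem_KV_trans (hb : b ∈ KV C E a) (hc : c ∈ KV C E b) : c ∈ KV C E a :=
  Relation.ReflTransGen.trans hb hc

lemma mem_KV_symm (h : b ∈ KV C E a) : a ∈ KV C E b := by
  induction h with
  | refl => exact mem_KV_self
  | tail _ hstep ih => exact mem_KV_trans (mem_KV_of_adj (adj_symm hstep)) ih

lemma KV_eq_of_mem (h : b ∈ KV C E a) : KV C E b = KV C E a :=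
  Set.ext fun _ => ⟨mem_KV_trans h, mem_KV_trans (mem_KV_symm h)⟩

lemma KV_mono (h : E ⊆ F) : KV C E a ⊆ KV C F a := fun _ hc =>
  Relation.ReflTransGen.mono (fun _ _ ⟨τ, hτ, hab⟩ => ⟨τ, h hτ, hab⟩) _ _ hc

lemma isCell_of_mem_KV (ha : IsCell C a) (hb : b ∈ KV C E a) : IsCell C b := by
  induction hb with
  | refl => exact ha
  | tail _ hstep _ =>
    obtain ⟨_, -, -, hface, -⟩ := hstep
    exact isCell_of_faceCell hface

lemma exists_mem_of_mem_KV_of_ne (hb : b ∈ KV C E a) (hab : b ≠ a) : ∃ τ, τ ∈ E := by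
  obtain rfl | ⟨_, ⟨τ, hτ, -⟩, -⟩ := Relation.ReflTransGen.cases_head hb
  · exact absurd rfl hab
  · exact ⟨τ, hτ⟩

lemma mem_KV_union_singleton (htwo : TwoCofaces C) (hτ : τ ∈ C.X) (hτn : τ.card = n)
    (h : b ∈ KV C (E ∪ {τ}) a) :
    b ∈ KV C E a ∨ ∃ u v, faceCell C τ u ∧ faceCell C τ v ∧ u ≠ v ∧
      u ∈ KV C E a ∧ b ∈ KV C E v := by
  induction h with
  | refl => exact Or.inl mem_KV_self
  | @tail x y _ hxy ih =>
    obtain ⟨τ', hτ' | rfl, hx, hy, hxy⟩ := hxy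
    · have hstep : adj C E x y := ⟨τ', hτ', hx, hy, hxy⟩
      exact ih.imp (fun h => mem_KV_trans h (mem_KV_of_adj hstep))
        fun ⟨u, v, hu, hv, huv, hau, hxv⟩ =>
          ⟨u, v, hu, hv, huv, hau, mem_KV_trans hxv (mem_KV_of_adj hstep)⟩
    · rcases ih with hax | ⟨u, v, hu, hv, huv, hau, -⟩
      · exact Or.inr ⟨x, y, hx, hy, hxy, hax, mem_KV_self⟩
      · rcases htwo.eq_or_eq hτ hτn hu hv huv hy with rfl | rfl
        · exact Or.inl hau
        · exact Or.inr ⟨u, y, hu, hv, huv, hau, mem_KV_self⟩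

end DualGraph

def IsStrictTotalOn (C : NComplex V n) (slt : Finset V → Finset V → Prop) : Prop :=
  (∀ σ ∈ C.X, ¬ slt σ σ) ∧
  (∀ σ ∈ C.X, ∀ σ' ∈ C.X, ∀ σ'' ∈ C.X, slt σ σ' → slt σ' σ'' → slt σ σ'') ∧
  (∀ σ ∈ C.X, ∀ σ' ∈ C.X, σ ≠ σ' → slt σ σ' ∨ slt σ' σ)

namespace IsStrictTotalOn

variable {C : NComplex V n} {slt : Finset V → Finset V → Prop} {a b c : Cell V}

lemma cslt_irrefl (h : IsStrictTotalOn C slt) (ha : IsCell C a) : ¬ cslt slt a a := by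
  cases a with
  | none => exact id
  | some σ => exact h.1 σ ha.1

lemma cslt_trans (h : IsStrictTotalOn C slt) (ha : IsCell C a) (hb : IsCell C b)
    (hc : IsCell C c) (hab : cslt slt a b) (hbc : cslt slt b c) : cslt slt a c := by
  cases a <;> cases b <;> cases c <;> simp_all [cslt]
  exact h.2.1 _ ha.1 _ hb.1 _ hc.1 hab hbc

lemma cslt_total (h : IsStrictTotalOn C slt) (ha : IsCell C a) (hb : IsCell C b)
    (hab : a ≠ b) : cslt slt a b ∨ cslt slt b a := by
  cases a <;> cases b <;> simp_all [cslt]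
  exact h.2.2 _ ha.1 _ hb.1 hab

lemma cslt_asymm (h : IsStrictTotalOn C slt) (ha : IsCell C a) (hb : IsCell C b)
    (hab : cslt slt a b) : ¬ cslt slt b a :=
  fun hba => h.cslt_irrefl ha (h.cslt_trans ha hb ha hab hba)

lemma exists_max (h : IsStrictTotalOn C slt) (T : Finset (Finset V)) (hT : ∀ σ ∈ T, σ ∈ C.X)
    (hne : T.Nonempty) : ∃ m ∈ T, ∀ σ ∈ T, σ ≠ m → slt σ m :=
  exists_forall_rel_of_strictTotal T hne (fun a ha => h.1 a (hT a ha))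
    (fun a ha b hb c hc => h.2.1 a (hT a ha) b (hT b hb) c (hT c hc))
    (fun a ha b hb => h.2.2 a (hT a ha) b (hT b hb))

lemma exists_mem_forall_mem_ege (h : IsStrictTotalOn C slt) (T : Finset (Finset V))
    (hT : ∀ σ ∈ T, σ ∈ C.X ∧ σ.card = n) (hne : T.Nonempty) :
    ∃ τ ∈ T, ∀ σ ∈ T, σ ∈ Ege C slt τ := by
  obtain ⟨τ, hτ, hmin⟩ := exists_forall_rel_of_strictTotal (lt := fun a b => slt b a) T hne
    (fun a ha => h.1 a (hT a ha).1)
    (fun a ha b hb c hc hab hbc => h.2.1 c (hT c hc).1 b (hT b hb).1 a (hT a ha).1 hbc hab)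
    (fun a ha b hb hab => (h.2.2 a (hT a ha).1 b (hT b hb).1 hab).symm)
  refine ⟨τ, hτ, fun σ hσ => ⟨(hT σ hσ).1, (hT σ hσ).2, ?_⟩⟩
  obtain rfl | hne := eq_or_ne σ τ
  exacts [Or.inl rfl, Or.inr (hmin σ hσ hne)]

lemma exists_isMaxCell (h : IsStrictTotalOn C slt) {K : Set (Cell V)}
    (hK : ∀ c ∈ K, IsCell C c) (hne : K.Nonempty) : ∃ m, IsMaxCell slt K m := by
  have hfin : K.Finite := (Finset.finite_toSet (insert none (C.X.image some))).subset
    fun c hc => by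
      cases c with
      | none => simp
      | some σ => simpa using (hK _ hc).1
  obtain ⟨m, hm, hmax⟩ := exists_forall_rel_of_strictTotal (lt := cslt slt) hfin.toFinset
    (by simpa using hne) (fun a ha => h.cslt_irrefl (hK a (by simpa using ha)))
    (fun a ha b hb c hc => h.cslt_trans (hK a (by simpa using ha)) (hK b (by simpa using hb))
      (hK c (by simpa using hc)))
    (fun a ha b hb => h.cslt_total (hK a (by simpa using ha)) (hK b (by simpa using hb)))
  exact ⟨m, by simpa using hm, fun c hc => hmax c (by simpa using hc)⟩

end IsStrictTotalOn

lemma IsMaxCell.not_cslt {C : NComplex V n} {slt : Finset V → Finset V → Prop}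
    {K : Set (Cell V)} {m c : Cell V} (hm : IsMaxCell slt K m) (h : IsStrictTotalOn C slt)
    (hK : ∀ c ∈ K, IsCell C c) (hc : c ∈ K) : ¬ cslt slt m c := by
  obtain rfl | hcm := eq_or_ne c m
  · exact h.cslt_irrefl (hK c hc)
  · exact h.cslt_asymm (hK c hc) (hK m hm.1) (hm.2 c hc hcm)

namespace IsOWL

variable {C : NComplex V n} {lev : Finset V → ℝ} {slt : Finset V → Finset V → Prop}
  {σ σ' : Finset V}

lemma isStrictTotalOn (h : IsOWL C lev slt) : IsStrictTotalOn C slt :=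
  ⟨h.2.1, h.2.2.1, h.2.2.2.1⟩

lemma lev_le (h : IsOWL C lev slt) (hσ : σ ∈ C.X) (hσ' : σ' ∈ C.X) (hlt : slt σ σ') :
    lev σ ≤ lev σ' :=
  h.2.2.2.2.1 σ hσ σ' hσ' hlt

lemma slt_of_lev_lt (h : IsOWL C lev slt) (hσ : σ ∈ C.X) (hσ' : σ' ∈ C.X)
    (hlt : lev σ < lev σ') : slt σ σ' :=
  (h.2.2.2.1 σ hσ σ' hσ' (by rintro rfl; exact hlt.false)).resolve_right
    fun h' => (h.lev_le hσ' hσ h').not_gt hlt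

end IsOWL

section PersistencePair

variable {C : NComplex V n} {slt : Finset V → Finset V → Prop} {τ ω₀ : Finset V}

lemma egt_subset_ege : Egt C slt τ ⊆ Ege C slt τ := fun _ ⟨hσ, hσn, h⟩ => ⟨hσ, hσn, Or.inr h⟩

lemma ege_eq_egt_union (hτ : τ ∈ C.X) (hτn : τ.card = n) :
    Ege C slt τ = Egt C slt τ ∪ {τ} := by
  ext σ
  simp only [Ege, Egt, Set.mem_union, Set.mem_singleton_iff]
  constructor
  · rintro ⟨hσ, hσn, rfl | h⟩
    exacts [Or.inr rfl, Or.inl ⟨hσ, hσn, h⟩]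
  · rintro (⟨hσ, hσn, h⟩ | rfl)
    exacts [⟨hσ, hσn, Or.inr h⟩, ⟨hτ, hτn, Or.inl rfl⟩]

namespace IsPersPair

lemma isCell (h : IsPersPair C slt τ ω₀) : IsCell C (some ω₀) := ⟨h.2.2.1, h.2.2.2.1⟩

lemma isMaxCell (h : IsPersPair C slt τ ω₀) :
    IsMaxCell slt (KV C (Egt C slt τ) (some ω₀)) (some ω₀) := by
  obtain ⟨-, -, -, -, c₁, -, -, -, -, -, -, hmax, -⟩ := h
  rwa [← KV_eq_of_mem hmax.1] at hmax

lemma not_cslt_of_mem_KV (h : IsPersPair C slt τ ω₀) (hslt : IsStrictTotalOn C slt)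
    {c : Cell V} (hc : c ∈ KV C (Egt C slt τ) (some ω₀)) : ¬ cslt slt (some ω₀) c :=
  h.isMaxCell.not_cslt hslt (fun _ => isCell_of_mem_KV h.isCell) hc

lemma exists_mem_KV_ege_cslt (h : IsPersPair C slt τ ω₀) :
    ∃ m ∈ KV C (Ege C slt τ) (some ω₀), cslt slt (some ω₀) m := by
  obtain ⟨hτ, hτn, -, -, c₁, c₂, hc, h₁, h₂, -, m₂, hmax₁, hmax₂, hlt⟩ := h
  refine ⟨m₂, mem_KV_trans (mem_KV_symm (KV_mono egt_subset_ege hmax₁.1)) ?_, hlt⟩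
  exact mem_KV_trans (mem_KV_of_adj ⟨τ, ⟨hτ, hτn, Or.inl rfl⟩, h₁, h₂, hc⟩)
    (KV_mono egt_subset_ege hmax₂.1)

end IsPersPair

lemma isMaxCell_of_forall_slt (hslt : IsStrictTotalOn C slt) (hω : IsCell C (some ω₀))
    (hgt : ∀ τ' ∈ Egt C slt τ, ∀ m ∈ KV C (Ege C slt τ') (some ω₀), ¬ cslt slt (some ω₀) m) :
    IsMaxCell slt (KV C (Egt C slt τ) (some ω₀)) (some ω₀) := by
  refine ⟨mem_KV_self, fun c hc hne => ?_⟩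
  have hcell := isCell_of_mem_KV hω hc
  refine (hslt.cslt_total hcell hω hne).resolve_right fun hbig => ?_
  obtain ⟨τ₁, hτ₁⟩ := exists_mem_of_mem_KV_of_ne hc hne
  obtain ⟨τm, hτm, hsub⟩ := hslt.exists_mem_forall_mem_ege (C.X.filter (· ∈ Egt C slt τ))
    (fun σ hσ => ⟨(Finset.mem_filter.1 hσ).1, (Finset.mem_filter.1 hσ).2.2.1⟩)
    ⟨τ₁, Finset.mem_filter.2 ⟨hτ₁.1, hτ₁⟩⟩
  refine hgt τm (Finset.mem_filter.1 hτm).2 c (KV_mono (fun σ hσ => ?_) hc) hbig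
  exact hsub σ (Finset.mem_filter.2 ⟨hσ.1, hσ⟩)

lemma exists_none_mem_KV_ege (hn : 0 < n) (hconn : DualConn C) (hslt : IsStrictTotalOn C slt)
    (hω : IsCell C (some ω₀)) :
    ∃ τ ∈ C.X, τ.card = n ∧ none ∈ KV C (Ege C slt τ) (some ω₀) := by
  obtain ⟨τ, hτω, hτn⟩ := Finset.exists_subset_card_eq (show n ≤ ω₀.card by have := hω.2; omega)
  have hτ : τ ∈ C.X := C.down_closed ω₀ hω.1 τ hτω (Finset.card_pos.1 (hτn ▸ hn))
  obtain ⟨τm, hτm, hall⟩ := hslt.exists_mem_forall_mem_ege (C.X.filter (·.card = n))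
    (fun σ hσ => Finset.mem_filter.1 hσ) ⟨τ, Finset.mem_filter.2 ⟨hτ, hτn⟩⟩
  refine ⟨τm, (Finset.mem_filter.1 hτm).1, (Finset.mem_filter.1 hτm).2, ?_⟩
  exact KV_mono (fun σ hσ => hall σ (Finset.mem_filter.2 hσ)) (hconn _ _ hω trivial)

lemma exists_isPersPair (hn : 0 < n) (htwo : TwoCofaces C) (hconn : DualConn C)
    (hslt : IsStrictTotalOn C slt) (hω : IsCell C (some ω₀)) : ∃ τ, IsPersPair C slt τ ω₀ := by
  -- the death simplex of `ω₀` is the `slt`-largest element of `P`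
  set P := C.X.filter fun τ => τ.card = n ∧
    ∃ m ∈ KV C (Ege C slt τ) (some ω₀), cslt slt (some ω₀) m
  have hP : P.Nonempty :=
    let ⟨τ, hτ, hτn, hnone⟩ := exists_none_mem_KV_ege hn hconn hslt hω
    ⟨τ, Finset.mem_filter.2 ⟨hτ, hτn, none, hnone, trivial⟩⟩
  obtain ⟨τ, hτP, hτmax⟩ := hslt.exists_max P (fun τ hτ => (Finset.mem_filter.1 hτ).1) hP
  obtain ⟨hτ, hτn, m, hm, hbig⟩ := Finset.mem_filter.1 hτP
  have hmax : IsMaxCell slt (KV C (Egt C slt τ) (some ω₀)) (some ω₀) :=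
    isMaxCell_of_forall_slt hslt hω fun τ' hτ' m' hm' hbig' => by
      have hτ'P : τ' ∈ P := Finset.mem_filter.2 ⟨hτ'.1, hτ'.2.1, m', hm', hbig'⟩
      exact hslt.1 τ hτ (hslt.2.1 τ hτ τ' hτ'.1 τ hτ hτ'.2.2
        (hτmax τ' hτ'P fun h => hslt.1 τ hτ (h ▸ hτ'.2.2)))
  have hcells : ∀ c ∈ KV C (Egt C slt τ) (some ω₀), IsCell C c := fun _ => isCell_of_mem_KV hω
  rw [ege_eq_egt_union hτ hτn] at hm
  obtain hm' | ⟨u, v, hu, hv, huv, hωu, hvm⟩ := mem_KV_union_singleton htwo hτ hτn hm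
  · exact absurd hbig (hmax.not_cslt hslt hcells hm')
  have hvK : v ∉ KV C (Egt C slt τ) (some ω₀) := fun h =>
    hmax.not_cslt hslt hcells (mem_KV_trans h hvm) hbig
  obtain ⟨m₂, hm₂⟩ := hslt.exists_isMaxCell
    (fun c => isCell_of_mem_KV (isCell_of_faceCell hv)) ⟨v, mem_KV_self⟩
  refine ⟨τ, hτ, hτn, hω.1, hω.2, u, v, huv, hu, hv, ?_, m₂, ?_, hm₂, ?_⟩
  · rwa [KV_eq_of_mem hωu]
  · rwa [KV_eq_of_mem hωu]
  · obtain rfl | hne := eq_or_ne m m₂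
    · exact hbig
    · exact hslt.cslt_trans hω (isCell_of_mem_KV (isCell_of_faceCell hv) hvm)
        (isCell_of_mem_KV (isCell_of_faceCell hv) hm₂.1) hbig (hm₂.2 m hvm hne)

end PersistencePair

lemma IsOWL.elev_subset_egt_or_ege_subset_elev {C : NComplex V n} {lev : Finset V → ℝ}
    {slt : Finset V → Finset V → Prop} (h : IsOWL C lev slt) {τ : Finset V} (hτ : τ ∈ C.X)
    (t : ℝ) : Elev C lev t ⊆ Egt C slt τ ∨ Ege C slt τ ⊆ Elev C lev t := by
  rcases lt_or_ge (lev τ) t with hlt | hge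
  · exact Or.inl fun σ ⟨hσ, hσn, hσt⟩ => ⟨hσ, hσn, h.slt_of_lev_lt hτ hσ (hlt.trans_le hσt)⟩
  · refine Or.inr fun σ ⟨hσ, hσn, hτσ⟩ => ⟨hσ, hσn, hge.trans ?_⟩
    rcases hτσ with rfl | hτσ
    exacts [le_rfl, h.lev_le hτ hσ hτσ]

lemma IsOWL.lex {C : NComplex V n} {rlev lev : Finset V → ℝ} {rslt : Finset V → Finset V → Prop}
    (hr : IsOWL C rlev rslt) (hlev : IsLevelFun C lev) :
    IsOWL C lev fun σ σ' => lev σ < lev σ' ∨ (lev σ = lev σ' ∧ rslt σ σ') := by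
  obtain ⟨-, hirr, htrans, htot, -, hsub⟩ := hr
  refine ⟨hlev, ?_, ?_, ?_, ?_, ?_⟩
  · rintro σ hσ (h | ⟨-, h⟩)
    exacts [h.false, hirr σ hσ h]
  · rintro a ha b hb c hc (hab | ⟨hab, hab'⟩) (hbc | ⟨hbc, hbc'⟩)
    · exact Or.inl (hab.trans hbc)
    · exact Or.inl (hbc ▸ hab)
    · exact Or.inl (hab ▸ hbc)
    · exact Or.inr ⟨hab.trans hbc, htrans a ha b hb c hc hab' hbc'⟩
  · intro a ha b hb hab
    rcases lt_trichotomy (lev a) (lev b) with h | h | h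
    · exact Or.inl (Or.inl h)
    · exact (htot a ha b hb hab).imp (fun h' => Or.inr ⟨h, h'⟩) fun h' => Or.inr ⟨h.symm, h'⟩
    · exact Or.inr (Or.inl h)
  · rintro a - b - (h | ⟨h, -⟩)
    exacts [h.le, h.le]
  · intro a ha b hb hab
    exact (hlev a ha b hb hab).lt_or_eq.imp_right fun h => ⟨h, hsub a ha b hb hab⟩

section Perturbation

variable {C : NComplex V n} {rlev : Finset V → ℝ} {rslt : Finset V → Finset V → Prop}
  {η : ℝ} {A : Set (Finset V)} {σ σ' : Finset V}

lemma pertLev_of_isCell (h : IsCell C (some σ)) : pertLev C rlev η A σ = rlev σ + η :=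
  if_pos (Or.inl h)

lemma pertLev_of_mem (h : σ ∈ A) : pertLev C rlev η A σ = rlev σ + η :=
  if_pos (Or.inr h)

lemma pertLev_of_notMem (hσn : σ.card = n) (h : σ ∉ A) : pertLev C rlev η A σ = rlev σ - η :=
  if_neg fun h' => h'.elim (fun h'' => by omega) h

lemma pertLev_le (hη : 0 ≤ η) : pertLev C rlev η A σ ≤ rlev σ + η := by
  unfold pertLev; split_ifs <;> linarith

lemma abs_pertLev_sub_le (hη : 0 ≤ η) : |pertLev C rlev η A σ - rlev σ| ≤ η := by
  unfold pertLev; split_ifs <;> simp [abs_of_nonneg hη]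

lemma pertSlt_of_le (h : rslt σ σ') (hle : pertLev C rlev η A σ ≤ pertLev C rlev η A σ') :
    pertSlt C rlev rslt η A σ σ' :=
  hle.lt_or_eq.imp_right fun heq => ⟨heq, h⟩

lemma isLevelFun_pertLev (hr : IsLevelFun C rlev) (hA : ∀ τ ∈ A, τ.card = n) (hη : 0 ≤ η) :
    IsLevelFun C (pertLev C rlev η A) := by
  intro σ hσ σ' hσ' hss
  have hcard : σ.card < σ'.card := Finset.card_lt_card hss
  have hσ'le := card_le_of_mem hσ'
  have hr' := hr σ hσ σ' hσ' hss
  have hσle : pertLev C rlev η A σ ≤ rlev σ + η := pertLev_le hη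
  by_cases h' : IsCell C (some σ') ∨ σ' ∈ A
  · rw [show pertLev C rlev η A σ' = rlev σ' + η from if_pos h']
    linarith
  · have h : ¬ (IsCell C (some σ) ∨ σ ∈ A) := by
      rintro (⟨-, hσn⟩ | hσA)
      · omega
      · exact h' (Or.inl ⟨hσ', by have := hA σ hσA; omega⟩)
    rw [show pertLev C rlev η A σ' = rlev σ' - η from if_neg h',
      show pertLev C rlev η A σ = rlev σ - η from if_neg h]
    linarith

lemma elev_pertLev_eq {t : ℝ} (hA : ∀ τ ∈ A, τ ∈ C.X ∧ τ.card = n ∧ t ≤ rlev τ + η)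
    (hAc : ∀ τ ∈ C.X, τ.card = n → τ ∉ A → rlev τ - η < t) :
    Elev C (pertLev C rlev η A) t = A := by
  ext τ
  refine ⟨fun ⟨hτ, hτn, ht⟩ => by_contra fun hτA => ?_, fun hτA => ?_⟩
  · rw [pertLev_of_notMem hτn hτA] at ht
    exact (hAc τ hτ hτn hτA).not_ge ht
  · obtain ⟨hτ, hτn, ht⟩ := hA τ hτA
    exact ⟨hτ, hτn, (pertLev_of_mem hτA).symm ▸ ht⟩

lemma inR_pert (hr : IsOWL C rlev rslt) {ω₀ : Finset V} (hω : IsCell C (some ω₀)) {ε : ℝ}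
    (hA : ∀ τ ∈ A, τ.card = n) (hη : 0 ≤ η) (hηε : η < ε / 2) :
    InR C rlev rslt ω₀ ε (pertLev C rlev η A) (pertSlt C rlev rslt η A) := by
  refine ⟨hr.lex (isLevelFun_pertLev hr.1 hA hη), fun σ _ => ?_, fun σ hσ h => ?_⟩
  · exact (abs_pertLev_sub_le hη).trans_lt hηε
  · have hσle : pertLev C rlev η A σ ≤ rlev σ + η := pertLev_le hη
    refine pertSlt_of_le h ?_
    rw [pertLev_of_isCell hω]
    linarith [hr.lev_le hσ hω.1 h]

end Perturbation

lemma exists_pos_lt_half_forall_lt_add_two_mul {α : Type*} (S : Finset α) (f : α → ℝ) (a : ℝ)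
    {ε : ℝ} (hε : 0 < ε) : ∃ η, 0 < η ∧ η < ε / 2 ∧ ∀ x ∈ S, f x < a + ε → f x < a + 2 * η := by
  set T := insert a ((S.filter fun x => f x < a + ε).image f)
  have hT : T.Nonempty := Finset.insert_nonempty _ _
  have hab : a ≤ T.max' hT := T.le_max' a (Finset.mem_insert_self _ _)
  have hb : T.max' hT < a + ε := (T.max'_lt_iff hT).2 fun y hy => by
    rcases Finset.mem_insert.1 hy with rfl | hy
    · linarith
    · obtain ⟨x, hx, rfl⟩ := Finset.mem_image.1 hy
      exact (Finset.mem_filter.1 hx).2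
  refine ⟨(T.max' hT - a + ε) / 4, by linarith, by linarith, fun x hx hfx => ?_⟩
  have : f x ≤ T.max' hT := T.le_max' _ (Finset.mem_insert_of_mem
    (Finset.mem_image_of_mem f (Finset.mem_filter.2 ⟨hx, hfx⟩)))
  linarith

section Separation

variable {C : NComplex V n} {E H : Set (Finset V)} {x y z : Cell V}

def edgesAvoiding (C : NComplex V n) (H : Set (Finset V)) (T : Set (Cell V)) :
    Set (Finset V) :=
  {τ | τ ∈ H ∧ ∀ c, faceCell C τ c → c ∉ T}

lemma mem_KV_iff_of_mem_KV_union_edgesAvoiding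
    (hy : y ∈ KV C (E ∪ edgesAvoiding C H (KV C E z)) x) :
    y ∈ KV C E z ↔ x ∈ KV C E z := by
  induction hy with
  | refl => rfl
  | @tail a b _ hab ih =>
    obtain ⟨τ, hτE | ⟨-, hτ⟩, ha, hb, hne⟩ := hab
    · rw [← ih]
      exact ⟨fun h => mem_KV_trans h (mem_KV_of_adj (adj_symm ⟨τ, hτE, ha, hb, hne⟩)),
        fun h => mem_KV_trans h (mem_KV_of_adj ⟨τ, hτE, ha, hb, hne⟩)⟩
    · rw [← ih]
      exact iff_of_false (hτ b hb) (hτ a ha)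

/-- Along a walk from `x` in `G(H)`, whichever of the `E`-components of `x` and `z` was visited
last, the rest of the walk avoids the other one. -/
lemma mem_KV_union_edgesAvoiding_or (htwo : TwoCofaces C)
    (hH : ∀ τ ∈ H, τ ∈ C.X ∧ τ.card = n) (hxz : x ∉ KV C E z) (hy : y ∈ KV C H x) :
    y ∈ KV C (E ∪ edgesAvoiding C H (KV C E z)) x ∨
      y ∈ KV C (E ∪ edgesAvoiding C H (KV C E x)) z := by
  induction hy with
  | refl => exact Or.inl mem_KV_self
  | @tail a b _ hab ih =>
    by_cases hbx : b ∈ KV C E x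
    · exact Or.inl (KV_mono Set.subset_union_left hbx)
    by_cases hbz : b ∈ KV C E z
    · exact Or.inr (KV_mono Set.subset_union_left hbz)
    obtain ⟨τ, hτ, ha, hb, hne⟩ := hab
    have hfaces : ∀ c, faceCell C τ c → c = a ∨ c = b :=
      fun c hc => htwo.eq_or_eq (hH τ hτ).1 (hH τ hτ).2 ha hb hne hc
    refine ih.imp (fun h => ?_) fun h => ?_
    · have haz : a ∉ KV C E z := fun h' => hxz ((mem_KV_iff_of_mem_KV_union_edgesAvoiding h).1 h')
      refine mem_KV_trans h (mem_KV_of_adj ⟨τ, Or.inr ⟨hτ, fun c hc => ?_⟩, ha, hb, hne⟩)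
      rcases hfaces c hc with rfl | rfl
      exacts [haz, hbz]
    · have hzx : z ∉ KV C E x := fun h' => hxz (mem_KV_symm h')
      have hax : a ∉ KV C E x := fun h' => hzx ((mem_KV_iff_of_mem_KV_union_edgesAvoiding h).1 h')
      refine mem_KV_trans h (mem_KV_of_adj ⟨τ, Or.inr ⟨hτ, fun c hc => ?_⟩, ha, hb, hne⟩)
      rcases hfaces c hc with rfl | rfl
      exacts [hax, hbx]

lemma exists_separating_edges (htwo : TwoCofaces C) (hH : ∀ τ ∈ H, τ ∈ C.X ∧ τ.card = n)
    (hxz : x ∉ KV C E z) (hy : y ∈ KV C H x) :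
    ∃ A, E ⊆ A ∧ A ⊆ E ∪ H ∧ z ∉ KV C A x ∧ (y ∈ KV C A x ∨ y ∈ KV C A z) := by
  have hsub : ∀ T, E ∪ edgesAvoiding C H T ⊆ E ∪ H :=
    fun T => Set.union_subset_union_right E fun τ hτ => hτ.1
  rcases mem_KV_union_edgesAvoiding_or htwo hH hxz hy with h | h
  · refine ⟨_, Set.subset_union_left, hsub _, fun hz => hxz ?_, Or.inl h⟩
    exact (mem_KV_iff_of_mem_KV_union_edgesAvoiding hz).1 mem_KV_self
  · refine ⟨_, Set.subset_union_left, hsub _, fun hz => hxz ?_, Or.inr h⟩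
    exact mem_KV_symm ((mem_KV_iff_of_mem_KV_union_edgesAvoiding (mem_KV_symm hz)).1 mem_KV_self)

end Separation

lemma not_mem_KV_egt_of_separated {C : NComplex V n} {lev : Finset V → ℝ}
    {slt : Finset V → Finset V → Prop} (hq : IsOWL C lev slt) {τ ω₀ : Finset V}
    (hpair : IsPersPair C slt τ ω₀) {t : ℝ} {c m : Cell V}
    (hc : c ∉ KV C (Elev C lev t) (some ω₀)) (hbig : cslt slt (some ω₀) m)
    (hm : m ∈ KV C (Elev C lev t) (some ω₀) ∨ m ∈ KV C (Elev C lev t) c) :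
    c ∉ KV C (Egt C slt τ) (some ω₀) := by
  intro hcO
  rcases hq.elev_subset_egt_or_ege_subset_elev hpair.1 t with hsub | hsub
  · refine hpair.not_cslt_of_mem_KV hq.isStrictTotalOn ?_ hbig
    rcases hm with hm | hm
    exacts [KV_mono hsub hm, mem_KV_trans hcO (KV_mono hsub hm)]
  · exact hc (KV_mono (egt_subset_ege.trans hsub) hcO)

section StableVolume

variable {C : NComplex V n} {rlev : Finset V → ℝ} {rslt : Finset V → Finset V → Prop}
  {τ₀ ω₀ : Finset V} {ε : ℝ}

lemma exists_inR_elev_eq (hr : IsOWL C rlev rslt) (hω : IsCell C (some ω₀)) (hε : 0 < ε)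
    {s : ℝ} {A : Set (Finset V)} (hA : ∀ τ ∈ A, τ ∈ C.X ∧ τ.card = n ∧ s ≤ rlev τ)
    (hEA : Elev C rlev (s + ε) ⊆ A) :
    ∃ ql qs t, InR C rlev rslt ω₀ ε ql qs ∧ Elev C ql t = A ∧
      ∀ m, IsCell C m → cslt rslt (some ω₀) m → cslt qs (some ω₀) m := by
  obtain ⟨η, hη, hηε, hgap⟩ := exists_pos_lt_half_forall_lt_add_two_mul C.X rlev s hε
  refine ⟨_, _, s + η, inR_pert hr hω (fun τ hτ => (hA τ hτ).2.1) hη.le hηε, ?_, ?_⟩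
  · refine elev_pertLev_eq (fun τ hτ => ?_) fun τ hτ hτn hτA => ?_
    · obtain ⟨hτ, hτn, hsτ⟩ := hA τ hτ
      exact ⟨hτ, hτn, by linarith⟩
    · have := hgap τ hτ (not_le.1 fun h => hτA (hEA ⟨hτ, hτn, h⟩))
      linarith
  · rintro (_ | σ) hσ h
    · trivial
    · refine pertSlt_of_le h ?_
      rw [pertLev_of_isCell hω, pertLev_of_isCell hσ]
      linarith [hr.lev_le hω.1 hσ.1 h]

lemma SV_subset_OV (hn : 0 < n) (htwo : TwoCofaces C) (hconn : DualConn C)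
    (hr : IsOWL C rlev rslt) (hpair : IsPersPair C rslt τ₀ ω₀) {ql : Finset V → ℝ}
    {qs : Finset V → Finset V → Prop} (hq : InR C rlev rslt ω₀ ε ql qs) :
    SV C rlev τ₀ ω₀ ε ⊆ OV C qs ω₀ := by
  obtain ⟨hqOWL, hclose, hord⟩ := hq
  obtain ⟨τ, hτ⟩ := exists_isPersPair hn htwo hconn hqOWL.isStrictTotalOn hpair.isCell
  refine fun c hc => ⟨τ, hτ, KV_mono ?_ hc⟩
  rcases hqOWL.elev_subset_egt_or_ege_subset_elev hτ.1 (rlev τ₀ + ε / 2) with hsub | hsub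
  · refine fun σ ⟨hσ, hσn, h⟩ => hsub ⟨hσ, hσn, ?_⟩
    linarith [abs_lt.1 (hclose σ hσ)]
  · have hsub' : Ege C qs τ ⊆ Egt C rslt τ₀ := fun σ hσ => by
      obtain ⟨hσ, hσn, h⟩ := hsub hσ
      exact ⟨hσ, hσn, hr.slt_of_lev_lt hpair.1 hσ (by linarith [abs_lt.1 (hclose σ hσ)])⟩
    obtain ⟨m, hm, hbig⟩ := hτ.exists_mem_KV_ege_cslt
    have hmr := KV_mono hsub' hm
    have hcell := isCell_of_mem_KV hpair.isCell hmr
    obtain rfl | hne := eq_or_ne m (some ω₀)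
    · exact absurd hbig (hqOWL.isStrictTotalOn.cslt_irrefl hcell)
    have hlt : cslt qs m (some ω₀) := by
      rcases m with _ | σ
      · exact hpair.isMaxCell.2 _ hmr hne
      · exact hord σ hcell.1 (hpair.isMaxCell.2 _ hmr hne)
    exact absurd hbig (hqOWL.isStrictTotalOn.cslt_asymm hcell hpair.isCell hlt)

lemma mem_SV_of_forall_inR (htwo : TwoCofaces C) (hr : IsOWL C rlev rslt)
    (hpair : IsPersPair C rslt τ₀ ω₀) (hε : 0 < ε) {c : Cell V}
    (hc : ∀ ql qs, InR C rlev rslt ω₀ ε ql qs → c ∈ OV C qs ω₀) :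
    c ∈ SV C rlev τ₀ ω₀ ε := by
  by_contra hcS
  have hE : Elev C rlev (rlev τ₀ + ε) ⊆ Ege C rslt τ₀ := fun σ ⟨hσ, hσn, h⟩ =>
    ⟨hσ, hσn, Or.inr (hr.slt_of_lev_lt hpair.1 hσ (by linarith))⟩
  obtain ⟨m, hm, hbig⟩ := hpair.exists_mem_KV_ege_cslt
  obtain ⟨A, hEA, hAH, hcA, hmA⟩ := exists_separating_edges htwo
    (fun σ hσ => ⟨hσ.1, hσ.2.1⟩) (fun h => hcS (mem_KV_symm h)) hm
  have hA : ∀ σ ∈ A, σ ∈ C.X ∧ σ.card = n ∧ rlev τ₀ ≤ rlev σ := fun σ hσ => by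
    obtain ⟨hσ, hσn, h⟩ := Set.union_subset hE subset_rfl (hAH hσ)
    refine ⟨hσ, hσn, ?_⟩
    rcases h with rfl | h
    exacts [le_rfl, hr.lev_le hpair.1 hσ h]
  obtain ⟨ql, qs, t, hq, rfl, hpres⟩ := exists_inR_elev_eq hr hpair.isCell hε hA hEA
  obtain ⟨τ, hτ, hcτ⟩ := hc ql qs hq
  exact not_mem_KV_egt_of_separated hq.1 hτ hcA
    (hpres m (isCell_of_mem_KV hpair.isCell hm) hbig) hmA hcτ

end StableVolume

theorem stable_volume_eq_iInter_optimal_volumes_general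
    (C : NComplex V n) (htwo : TwoCofaces C) (hconn : DualConn C)
    (rlev : Finset V → ℝ) (rslt : Finset V → Finset V → Prop)
    (hr : IsOWL C rlev rslt)
    (τ₀ ω₀ : Finset V) (hpair : IsPersPair C rslt τ₀ ω₀)
    (ε : ℝ) (hε : 0 < ε) :
    SV C rlev τ₀ ω₀ ε =
      ⋂ q ∈ {q : (Finset V → ℝ) × (Finset V → Finset V → Prop) |
        InR C rlev rslt ω₀ ε q.1 q.2}, OV C q.2 ω₀ := by
  have hn : 0 < n := hpair.2.1 ▸ Finset.card_pos.2 (C.nonempty_mem τ₀ hpair.1)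
  ext c
  simp only [Set.mem_iInter, Set.mem_ofPred_eq, Prod.forall]
  exact ⟨fun hc ql qs hq => SV_subset_OV hn htwo hconn hr hpair hq hc,
    fun hc => mem_SV_of_forall_inR htwo hr hpair hε hc⟩

/-- Theorem 3.2, graph-theoretic form: the stable volume is the
intersection of the optimal volumes over all orders with levels in `R_ε`. -/
theorem stable_volume_eq_iInter_optimal_volumes
    (hn : 2 ≤ n) (C : NComplex V n) (htwo : TwoCofaces C) (hconn : DualConn C)
    (rlev : Finset V → ℝ) (rslt : Finset V → Finset V → Prop)
    (hr : IsOWL C rlev rslt)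
    (τ₀ ω₀ : Finset V) (hpair : IsPersPair C rslt τ₀ ω₀)
    (ε : ℝ) (hε : 0 < ε) :
    SV C rlev τ₀ ω₀ ε =
      ⋂ q ∈ {q : (Finset V → ℝ) × (Finset V → Finset V → Prop) |
        InR C rlev rslt ω₀ ε q.1 q.2}, OV C q.2 ω₀ :=
  stable_volume_eq_iInter_optimal_volumes_general C htwo hconn rlev rslt hr τ₀ ω₀ hpair ε hε

end StableVol
end

section
/- Theorem (the paper's Theorem 4.2: the stable volume by optimization coincides with the stable volume). Let r be an order with levels on X, let (τ₀, ω₀) be a persistence pair of r, and let ε > 0. Then the chain z₁ := ω₀ + Σ_{ω ∈ K_V(G(r̂ ≥ r̂(τ₀)+ε), ω₀), ω ≠ ω₀} ω is a feasible chain and is the unique minimizer of ‖z‖₀ among all feasible chains; in particular, the support of the ‖·‖₀-minimal feasible chain (the stable volume by optimization) equals the stable volume SV_ε(r, τ₀, ω₀). -/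
open scoped Classical

namespace StableVol

variable {V : Type*} [DecidableEq V] {n : ℕ}

/-!
Since `ε > 0`, every edge of `G(r̂ ≥ r̂(τ₀) + ε)` lies above `τ₀`, so the stable volume is
contained in the `G(≻ τ₀)`-component of `ω₀`, whose maximum is `ω₀`. Hence it avoids `ω∞`, all
its simplices precede `ω₀`, and every one of its edges is a constraint `τ*(∂z) = 0` of the
problem. Such a constraint says that the two cofaces of `τ` carry equal coefficients, so every
feasible chain is `1` on the whole stable volume; conversely the indicator chain of a component
of `G(r̂ ≥ r̂(τ₀) + ε)` meets every constraint coming from an edge of that graph. So the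
indicator chain has the smallest support, and a feasible chain of the same size equals it.
-/

section DualGraph

variable {C : NComplex V n} {E : Set (Finset V)}

instance adj.instSymm : Std.Symm (adj C E) :=
  ⟨fun _ _ ⟨τ, hτ, h, h', hne⟩ => ⟨τ, hτ, h', h, hne.symm⟩⟩

lemma KV_comm {c₀ c : Cell V} (h : c ∈ KV C E c₀) : c₀ ∈ KV C E c :=
  Relation.ReflTransGen.stdSymm.symm _ _ h

lemma KV_eq_of_mem_s1 {c₀ c : Cell V} (h : c ∈ KV C E c₀) : KV C E c = KV C E c₀ :=
  Set.ext fun _ => ⟨(Relation.ReflTransGen.trans h ·), (Relation.ReflTransGen.trans (KV_comm h) ·)⟩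

lemma adj_mono {E' : Set (Finset V)} (hE : E ⊆ E') : adj C E ≤ adj C E' :=
  fun _ _ ⟨τ, hτ, h⟩ => ⟨τ, hE hτ, h⟩

lemma KV_mono_s1 {E' : Set (Finset V)} (hE : E ⊆ E') (c₀ : Cell V) : KV C E c₀ ⊆ KV C E' c₀ :=
  Relation.ReflTransGen.mono (adj_mono hE) c₀

lemma mem_KV_iff_of_face {c₀ c c' : Cell V} {τ : Finset V} (hτ : τ ∈ E)
    (h : faceCell C τ c) (h' : faceCell C τ c') : c ∈ KV C E c₀ ↔ c' ∈ KV C E c₀ := by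
  rcases eq_or_ne c c' with rfl | hne
  · rfl
  exact ⟨(·.tail ⟨τ, hτ, h, h', hne⟩), (·.tail ⟨τ, hτ, h', h, hne.symm⟩)⟩

lemma exists_face_of_mem_KV {c₀ c : Cell V} (h : c ∈ KV C E c₀) (hne : c ≠ c₀) :
    ∃ τ ∈ E, faceCell C τ c := by
  rcases Relation.ReflTransGen.cases_tail h with rfl | ⟨_, -, τ, hτ, -, hc, -⟩
  · exact absurd rfl hne
  · exact ⟨τ, hτ, hc⟩

lemma TwoCofaces.faceCell_iff (htwo : TwoCofaces C) {τ : Finset V} {c c' : Cell V}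
    (hτX : τ ∈ C.X) (hτcard : τ.card = n) (h : faceCell C τ c) (h' : faceCell C τ c')
    (hne : c ≠ c') (d : Cell V) : faceCell C τ d ↔ d = c ∨ d = c' := by
  obtain ⟨c₁, c₂, -, hface⟩ := htwo τ hτX hτcard
  rw [hface]
  rcases (hface c).1 h with rfl | rfl <;> rcases (hface c').1 h' with rfl | rfl <;> tauto

lemma ssubset_of_faceCell {τ ω : Finset V} (hτ : τ.card = n) (h : faceCell C τ (some ω)) :
    τ ⊂ ω :=
  Finset.ssubset_iff_subset_ne.2 ⟨h.2.2, fun heq => by have := h.2.1; subst heq; omega⟩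

end DualGraph

/-- The coefficient of a chain on an `n`-cell; the formal cell `ω∞` carries no coefficient. -/
def cellCoeff (z : Finset V → ZMod 2) (c : Cell V) : ZMod 2 :=
  c.elim 0 z

lemma bsum_eq_cellCoeff_add {C : NComplex V n} {τ : Finset V} {c₁ c₂ : Cell V}
    (hne : c₁ ≠ c₂) (hface : ∀ c, faceCell C τ c ↔ c = c₁ ∨ c = c₂) (z : Finset V → ZMod 2) :
    bsum C τ z = cellCoeff z c₁ + cellCoeff z c₂ := by
  have hcofaces : Finset.insertNone (C.X.filter fun ω => ω.card = n + 1 ∧ τ ⊆ ω) =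
      insert none {c₁, c₂} := by
    ext (_ | ω)
    · simp
    · have := hface (some ω)
      simp only [faceCell] at this
      simp [this, eq_comm]
  rw [bsum, ← zero_add (Finset.sum _ _), Finset.add_sum_eq_sum_insertNone, hcofaces]
  change ∑ c ∈ insert none {c₁, c₂}, cellCoeff z c = _
  rw [Finset.sum_insert_zero (f := cellCoeff z) rfl, Finset.sum_pair hne]

section StableVolume

variable {C : NComplex V n} {rlev : Finset V → ℝ} {rslt : Finset V → Finset V → Prop}
  {τ₀ ω₀ : Finset V} {ε : ℝ}

lemma Elev_subset_Egt (hr : IsOWL C rlev rslt) (hτ₀ : τ₀ ∈ C.X) (hε : 0 < ε) :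
    Elev C rlev (rlev τ₀ + ε) ⊆ Egt C rslt τ₀ := by
  obtain ⟨-, -, -, htotal, hmono, -⟩ := hr
  rintro τ ⟨hτX, hcard, hlev⟩
  refine ⟨hτX, hcard, ?_⟩
  have hne : τ₀ ≠ τ := by
    rintro rfl
    linarith
  refine (htotal τ₀ hτ₀ τ hτX hne).resolve_right fun h => ?_
  linarith [hmono τ hτX τ₀ hτ₀ h]

lemma IsPersPair.isMaxCell_KV (hpair : IsPersPair C rslt τ₀ ω₀) :
    IsMaxCell rslt (KV C (Egt C rslt τ₀) (some ω₀)) (some ω₀) := by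
  obtain ⟨-, -, -, -, _, _, -, -, -, -, _, hmax, -, -⟩ := hpair
  rwa [KV_eq_of_mem_s1 hmax.1]

lemma cslt_of_mem_SV (hr : IsOWL C rlev rslt) (hpair : IsPersPair C rslt τ₀ ω₀)
    (hε : 0 < ε) {c : Cell V} (hc : c ∈ SV C rlev τ₀ ω₀ ε) (hne : c ≠ some ω₀) :
    cslt rslt c (some ω₀) :=
  hpair.isMaxCell_KV.2 c (KV_mono_s1 (Elev_subset_Egt hr hpair.1 hε) _ hc) hne

lemma none_notMem_SV (hr : IsOWL C rlev rslt) (hpair : IsPersPair C rslt τ₀ ω₀)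
    (hε : 0 < ε) : (none : Cell V) ∉ SV C rlev τ₀ ω₀ ε :=
  fun h => cslt_of_mem_SV hr hpair hε h (Option.some_ne_none ω₀).symm

lemma mem_Fcells_of_mem_SV (hr : IsOWL C rlev rslt) (hpair : IsPersPair C rslt τ₀ ω₀)
    (hε : 0 < ε) {ω : Finset V} (hω : some ω ∈ SV C rlev τ₀ ω₀ ε) (hne : ω ≠ ω₀) :
    ω ∈ Fcells C rlev rslt τ₀ ω₀ ε := by
  have hne' : some ω ≠ some ω₀ := Option.some_injective _ |>.ne hne
  obtain ⟨τ, ⟨hτX, hτcard, hτlev⟩, hface⟩ := exists_face_of_mem_KV hω hne'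
  exact ⟨hface.1, hface.2.1, hτlev.trans (hr.1 τ hτX ω hface.1 (ssubset_of_faceCell hτcard hface)),
    cslt_of_mem_SV hr hpair hε hω hne'⟩

lemma slt_of_face_of_mem_SV (hr : IsOWL C rlev rslt) (hpair : IsPersPair C rslt τ₀ ω₀)
    (hε : 0 < ε) {τ : Finset V} (hτX : τ ∈ C.X) (hτcard : τ.card = n) {c : Cell V}
    (hc : c ∈ SV C rlev τ₀ ω₀ ε) (hface : faceCell C τ c) : rslt τ ω₀ := by
  obtain _ | ω := c
  · exact absurd hc (none_notMem_SV hr hpair hε)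
  have ⟨_, _, htrans, _, _, hsub⟩ := hr
  have hτω : rslt τ ω := hsub τ hτX ω hface.1 (ssubset_of_faceCell hτcard hface)
  rcases eq_or_ne ω ω₀ with rfl | hne
  · exact hτω
  · exact htrans τ hτX ω hface.1 ω₀ hpair.2.2.1 hτω
      (cslt_of_mem_SV hr hpair hε hc (Option.some_injective _ |>.ne hne))

lemma isFeasible_of_eq_indicator_SV (htwo : TwoCofaces C) (hr : IsOWL C rlev rslt)
    (hpair : IsPersPair C rslt τ₀ ω₀) (hε : 0 < ε) {z₁ : Finset V → ZMod 2}
    (hz₁ : ∀ ω, z₁ ω = if (some ω : Cell V) ∈ SV C rlev τ₀ ω₀ ε then 1 else 0) :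
    IsFeasible C rlev rslt τ₀ ω₀ ε z₁ := by
  have hcoeff : ∀ c, cellCoeff z₁ c = if c ∈ SV C rlev τ₀ ω₀ ε then 1 else 0 := by
    rintro (_ | ω)
    · exact (if_neg (none_notMem_SV hr hpair hε)).symm
    · exact hz₁ ω
  refine ⟨(hcoeff (some ω₀)).trans (if_pos .refl), fun ω hne hF => ?_, ?_⟩
  · exact (hz₁ ω).trans (if_neg fun hω => hF (mem_Fcells_of_mem_SV hr hpair hε hω hne))
  · rintro τ ⟨hτX, hτcard, hτlev, -⟩
    obtain ⟨c₁, c₂, hne, hface⟩ := htwo τ hτX hτcard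
    have hiff : c₁ ∈ SV C rlev τ₀ ω₀ ε ↔ c₂ ∈ SV C rlev τ₀ ω₀ ε :=
      mem_KV_iff_of_face ⟨hτX, hτcard, hτlev⟩ ((hface c₁).2 (.inl rfl)) ((hface c₂).2 (.inr rfl))
    rw [bsum_eq_cellCoeff_add hne hface, hcoeff, hcoeff]
    split_ifs <;> first | decide | tauto

lemma IsFeasible.eq_one_of_mem_SV (htwo : TwoCofaces C) (hr : IsOWL C rlev rslt)
    (hpair : IsPersPair C rslt τ₀ ω₀) (hε : 0 < ε) {z : Finset V → ZMod 2}
    (hz : IsFeasible C rlev rslt τ₀ ω₀ ε z) {ω : Finset V}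
    (hω : some ω ∈ SV C rlev τ₀ ω₀ ε) : z ω = 1 := by
  suffices ∀ c ∈ SV C rlev τ₀ ω₀ ε, cellCoeff z c = 1 from this _ hω
  intro c hc
  induction hc with
  | refl => exact hz.1
  | @tail b c hb hbc ih =>
    obtain ⟨τ, ⟨hτX, hτcard, hτlev⟩, hfb, hfc, hne⟩ := hbc
    have hbound := hz.2.2 τ
      ⟨hτX, hτcard, hτlev, slt_of_face_of_mem_SV hr hpair hε hτX hτcard hb hfb⟩
    rw [bsum_eq_cellCoeff_add hne (htwo.faceCell_iff hτX hτcard hfb hfc hne), ih] at hbound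
    exact (CharTwo.add_eq_zero.1 hbound).symm

lemma IsFeasible.eq_zero_of_notMem (hpair : IsPersPair C rslt τ₀ ω₀)
    {z : Finset V → ZMod 2} (hz : IsFeasible C rlev rslt τ₀ ω₀ ε z) {ω : Finset V}
    (hω : ω ∉ C.X) : z ω = 0 :=
  hz.2.1 ω (fun h => hω (h ▸ hpair.2.2.1)) (fun hF => hω hF.1)

end StableVolume

section Norm0

lemma zmod_two_eq_of_ne_zero_iff {x y : ZMod 2} (h : x ≠ 0 ↔ y ≠ 0) : x = y := by
  revert x y
  decide

variable {C : NComplex V n} {z z' : Finset V → ZMod 2}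

lemma filter_ne_zero_subset (h : ∀ ω ∈ C.X, z ω ≠ 0 → z' ω ≠ 0) :
    C.X.filter (z · ≠ 0) ⊆ C.X.filter (z' · ≠ 0) := fun ω hω => by
  rw [Finset.mem_filter] at hω ⊢
  exact ⟨hω.1, h ω hω.1 hω.2⟩

lemma norm0_le_of_support_subset (h : ∀ ω ∈ C.X, z ω ≠ 0 → z' ω ≠ 0) :
    norm0 C z ≤ norm0 C z' :=
  Finset.card_le_card (filter_ne_zero_subset h)

lemma eq_of_support_subset_of_norm0_eq (h : ∀ ω ∈ C.X, z ω ≠ 0 → z' ω ≠ 0)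
    (hnorm : norm0 C z' = norm0 C z) (hz : ∀ ω ∉ C.X, z ω = 0) (hz' : ∀ ω ∉ C.X, z' ω = 0) :
    z' = z := by
  have hsupp : C.X.filter (z · ≠ 0) = C.X.filter (z' · ≠ 0) :=
    Finset.eq_of_subset_of_card_le (filter_ne_zero_subset h) hnorm.le
  funext ω
  by_cases hω : ω ∈ C.X
  · refine (zmod_two_eq_of_ne_zero_iff ?_).symm
    simpa only [Finset.mem_filter, hω, true_and] using Finset.ext_iff.1 hsupp ω
  · rw [hz ω hω, hz' ω hω]

end Norm0

theorem stable_volume_by_optimization_eq_stable_volume_general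
    (C : NComplex V n) (htwo : TwoCofaces C)
    (rlev : Finset V → ℝ) (rslt : Finset V → Finset V → Prop)
    (hr : IsOWL C rlev rslt)
    (τ₀ ω₀ : Finset V) (hpair : IsPersPair C rslt τ₀ ω₀)
    (ε : ℝ) (hε : 0 < ε) :
    ∀ z₁ : Finset V → ZMod 2,
      (∀ ω : Finset V,
        z₁ ω = if (some ω : Cell V) ∈ SV C rlev τ₀ ω₀ ε then 1 else 0) →
      IsFeasible C rlev rslt τ₀ ω₀ ε z₁ ∧
      (∀ z, IsFeasible C rlev rslt τ₀ ω₀ ε z → norm0 C z₁ ≤ norm0 C z) ∧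
      (∀ z, IsFeasible C rlev rslt τ₀ ω₀ ε z → norm0 C z = norm0 C z₁ → z = z₁) ∧
      (∀ ω : Finset V, z₁ ω ≠ 0 ↔ (some ω : Cell V) ∈ SV C rlev τ₀ ω₀ ε) := by
  intro z₁ hz₁
  have hsupp : ∀ ω, z₁ ω ≠ 0 ↔ some ω ∈ SV C rlev τ₀ ω₀ ε := fun ω => by
    rw [hz₁]
    split_ifs with h <;> simp [h]
  have hfeas := isFeasible_of_eq_indicator_SV htwo hr hpair hε hz₁
  have hsub : ∀ z, IsFeasible C rlev rslt τ₀ ω₀ ε z → ∀ ω ∈ C.X, z₁ ω ≠ 0 → z ω ≠ 0 :=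
    fun z hz ω _ hω => by
      rw [hz.eq_one_of_mem_SV htwo hr hpair hε ((hsupp ω).1 hω)]
      exact one_ne_zero
  refine ⟨hfeas, fun z hz => norm0_le_of_support_subset (hsub z hz),
    fun z hz hnorm => ?_, hsupp⟩
  exact eq_of_support_subset_of_norm0_eq (hsub z hz) hnorm
    (fun ω hω => hfeas.eq_zero_of_notMem hpair hω) (fun ω hω => hz.eq_zero_of_notMem hpair hω)

/-- Theorem 4.2: the indicator chain of the stable volume is a
feasible chain and is the unique `‖·‖₀`-minimizer among feasible chains; in
particular the support of the minimal feasible chain equals the stable volume. -/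
theorem stable_volume_by_optimization_eq_stable_volume
    (hn : 2 ≤ n) (C : NComplex V n) (htwo : TwoCofaces C) (hconn : DualConn C)
    (rlev : Finset V → ℝ) (rslt : Finset V → Finset V → Prop)
    (hr : IsOWL C rlev rslt)
    (τ₀ ω₀ : Finset V) (hpair : IsPersPair C rslt τ₀ ω₀)
    (ε : ℝ) (hε : 0 < ε) :
    ∀ z₁ : Finset V → ZMod 2,
      (∀ ω : Finset V,
        z₁ ω = if (some ω : Cell V) ∈ SV C rlev τ₀ ω₀ ε then 1 else 0) →
      IsFeasible C rlev rslt τ₀ ω₀ ε z₁ ∧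
      (∀ z, IsFeasible C rlev rslt τ₀ ω₀ ε z → norm0 C z₁ ≤ norm0 C z) ∧
      (∀ z, IsFeasible C rlev rslt τ₀ ω₀ ε z → norm0 C z = norm0 C z₁ → z = z₁) ∧
      (∀ ω : Finset V, z₁ ω ≠ 0 ↔ (some ω : Cell V) ∈ SV C rlev τ₀ ω₀ ε) :=
  stable_volume_by_optimization_eq_stable_volume_general C htwo rlev rslt hr τ₀ ω₀ hpair ε hε

end StableVol
end
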